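/- Uniqueness of subexponential harmonic extensions: let ψ and φ be P-harmonic functions on V agreeing on V_1, each satisfying the growth bound |f(v)| ≤ B β^n whenever d(𝟙, v) ≤ n, with 1 ≤ β < 1/(1−α'), where the hitting time T of V_1 satisfies P_u(T ≥ m) ≤ A(1−α')^m. Then ψ = φ on all of V. -/

import Mathlib

/-- The probability weight of a walk under simple random walk. -/
noncomputable def walkWeight {V : Type*} (G : SimpleGraph V)
    [∀ v : V, Fintype (G.neighborSet v)] {u v : V} (p : G.Walk u v) : ℝ :=
  ∏ i ∈ Finset.range p.length, (1 : ℝ) / (G.degree (p.getVert i))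

/-- `avoidProb₀ G V₁ u n`: the probability that the simple random walk started at `u`
stays outside `V₁` at all times `0, 1, …, n`; thus `P_u(T ≥ m) = avoidProb₀ G V₁ u (m−1)`
where `T = inf {n ≥ 0 : X_n ∈ V₁}`. -/
noncomputable def avoidProb₀ {V : Type*} (G : SimpleGraph V)
    [∀ v : V, Fintype (G.neighborSet v)] (V₁ : Set V) (u : V) (n : ℕ) : ℝ :=
  ∑' p : {p : Σ v : V, G.Walk u v // p.2.length = n ∧
      ∀ i, i ≤ n → p.2.getVert i ∉ V₁}, walkWeight G p.val.2

/-!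
Let `f = ψ - φ`; it is harmonic off `V₁` and vanishes on `V₁`. Harmonicity propagates `f(u)`
along the walk: for every `n`, `f(u)` is the sum, over walks of length `n` from `u` that avoid
`V₁`, of the walk's probability times `f` at its endpoint (walks that hit `V₁` contribute `0`).
The endpoints lie within distance `d(o, u) + n` of `o`, so
`|f(u)| ≤ 2Bβ^(d(o,u)+n+1) · P_u(T ≥ n+1) ≤ 2Bβ^(d(o,u)+1) A(1-α') · (β(1-α'))^n`,
which tends to `0` because `β(1-α') < 1`.
-/

open SimpleGraph

lemma abs_tsum_mul_le_of_finite {ι : Type*} [Finite ι] {w g : ι → ℝ} {C : ℝ}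
    (hw : ∀ i, 0 ≤ w i) (hg : ∀ i, |g i| ≤ C) : |∑' i, w i * g i| ≤ C * ∑' i, w i := by
  calc |∑' i, w i * g i| ≤ ∑' i, |w i * g i| := by
        simpa only [Real.norm_eq_abs] using
          norm_tsum_le_tsum_norm (f := fun i => w i * g i) Summable.of_finite
    _ ≤ ∑' i, C * w i := by
        refine Summable.tsum_le_tsum (fun i => ?_) Summable.of_finite Summable.of_finite
        rw [abs_mul, abs_of_nonneg (hw i), mul_comm C]
        exact mul_le_mul_of_nonneg_left (hg i) (hw i)
    _ = C * ∑' i, w i := tsum_mul_left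

lemma eq_zero_of_abs_le_mul_pow {x K r : ℝ} (hr₀ : 0 ≤ r) (hr₁ : r < 1)
    (h : ∀ n : ℕ, |x| ≤ K * r ^ n) : x = 0 := by
  have hlim : Filter.Tendsto (fun n : ℕ => K * r ^ n) Filter.atTop (nhds 0) := by
    simpa using (tendsto_pow_atTop_nhds_zero_of_lt_one hr₀ hr₁).const_mul K
  exact abs_nonpos_iff.mp (ge_of_tendsto' hlim h)

section WalkWeight

variable {V : Type*} (G : SimpleGraph V) [∀ v : V, Fintype (G.neighborSet v)]

lemma walkWeight_nonneg {u v : V} (p : G.Walk u v) : 0 ≤ walkWeight G p :=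
  Finset.prod_nonneg fun _ _ => by positivity

@[simp]
lemma walkWeight_nil (u : V) : walkWeight G (Walk.nil : G.Walk u u) = 1 := by
  simp [walkWeight]

@[simp]
lemma walkWeight_cons {u v w : V} (h : G.Adj u v) (q : G.Walk v w) :
    walkWeight G (Walk.cons h q) = walkWeight G q / G.degree u := by
  rw [div_eq_mul_one_div, mul_comm, walkWeight, walkWeight, Walk.length_cons,
    Finset.prod_range_succ', mul_comm]
  rfl

end WalkWeight

namespace SimpleGraph

variable {V : Type*} {G : SimpleGraph V} {V₁ : Set V}

variable (G V₁) in
/-- The index type of the sum defining `avoidProb₀ G V₁ u n`. -/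
abbrev AvoidingWalk (u : V) (n : ℕ) : Type _ :=
  {p : Σ v : V, G.Walk u v // p.2.length = n ∧ ∀ i, i ≤ n → p.2.getVert i ∉ V₁}

namespace AvoidingWalk

lemma isEmpty_of_mem {u : V} (hu : u ∈ V₁) (n : ℕ) : IsEmpty (G.AvoidingWalk V₁ u n) :=
  ⟨fun ⟨⟨_, p⟩, _, havoid⟩ => havoid 0 n.zero_le (by rwa [Walk.getVert_zero])⟩

abbrev uniqueZero {u : V} (hu : u ∉ V₁) : Unique (G.AvoidingWalk V₁ u 0) where
  default := ⟨⟨u, .nil⟩, rfl, fun _ _ => hu⟩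
  uniq := by
    rintro ⟨⟨v, p⟩, hlen, _⟩
    cases p with
    | nil => rfl
    | cons _ _ => simp at hlen

variable (G V₁) in
def cons {u : V} (hu : u ∉ V₁) {n : ℕ} (x : Σ v : G.neighborSet u, G.AvoidingWalk V₁ v n) :
    G.AvoidingWalk V₁ u (n + 1) :=
  ⟨⟨x.2.1.1, .cons x.1.2 x.2.1.2⟩, congrArg (· + 1) x.2.2.1, fun
    | 0, _ => hu
    | j + 1, hj => x.2.2.2 j (by omega)⟩

lemma cons_bijective {u : V} (hu : u ∉ V₁) (n : ℕ) :
    Function.Bijective (cons G V₁ hu (n := n)) := by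
  constructor
  · rintro ⟨⟨v, _⟩, ⟨⟨w, q⟩, _⟩⟩ ⟨⟨v', _⟩, ⟨⟨w', q'⟩, _⟩⟩ h
    obtain ⟨rfl, hqq'⟩ := Sigma.mk.inj_iff.mp (congrArg Subtype.val h)
    obtain ⟨rfl, hqq'⟩ := Walk.cons.inj (eq_of_heq hqq')
    cases eq_of_heq hqq'
    rfl
  · rintro ⟨⟨w, p⟩, hlen, havoid⟩
    cases p with
    | nil => simp at hlen
    | cons h q =>
      refine ⟨⟨⟨_, h⟩, ⟨⟨w, q⟩, by simpa using hlen, fun i hi => ?_⟩⟩, rfl⟩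
      simpa using havoid (i + 1) (by omega)

noncomputable def consEquiv {u : V} (hu : u ∉ V₁) (n : ℕ) :
    (Σ v : G.neighborSet u, G.AvoidingWalk V₁ v n) ≃ G.AvoidingWalk V₁ u (n + 1) :=
  .ofBijective _ (cons_bijective hu n)

variable [∀ v : V, Fintype (G.neighborSet v)]

instance finite (u : V) (n : ℕ) : Finite (G.AvoidingWalk V₁ u n) := by
  induction n generalizing u with
  | zero =>
    by_cases hu : u ∈ V₁
    · have := isEmpty_of_mem (G := G) hu 0
      infer_instance
    · have := uniqueZero (G := G) hu
      infer_instance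
  | succ n ih =>
    by_cases hu : u ∈ V₁
    · have := isEmpty_of_mem (G := G) hu (n + 1)
      infer_instance
    · exact .of_equiv _ (consEquiv hu n)

end AvoidingWalk

variable [∀ v : V, Fintype (G.neighborSet v)]

variable (G V₁) in
def IsHarmonicOff (f : V → ℝ) : Prop :=
  ∀ u ∉ V₁, (G.degree u : ℝ) * f u = ∑ v ∈ G.neighborFinset u, f v

lemma IsHarmonicOff.sub {f g : V → ℝ} (hf : G.IsHarmonicOff V₁ f) (hg : G.IsHarmonicOff V₁ g) :
    G.IsHarmonicOff V₁ (f - g) := fun u hu => by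
  simp only [Pi.sub_apply, mul_sub, Finset.sum_sub_distrib, hf u hu, hg u hu]

lemma tsum_avoidingWalk_walkWeight_mul {f : V → ℝ} (hdeg : ∀ v : V, 0 < G.degree v)
    (hf : G.IsHarmonicOff V₁ f) (hf₁ : ∀ v ∈ V₁, f v = 0) (n : ℕ) (u : V) :
    ∑' p : G.AvoidingWalk V₁ u n, walkWeight G p.1.2 * f p.1.1 = f u := by
  induction n generalizing u with
  | zero =>
    by_cases hu : u ∈ V₁
    · have := AvoidingWalk.isEmpty_of_mem (G := G) hu 0
      rw [tsum_empty, hf₁ u hu]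
    let := AvoidingWalk.uniqueZero (G := G) hu
    rw [tsum_fintype, Fintype.sum_unique]
    show walkWeight G (Walk.nil : G.Walk u u) * f u = f u
    rw [walkWeight_nil, one_mul]
  | succ n ih =>
    by_cases hu : u ∈ V₁
    · have := AvoidingWalk.isEmpty_of_mem (G := G) hu (n + 1)
      rw [tsum_empty, hf₁ u hu]
    have hdeg₀ : (G.degree u : ℝ) ≠ 0 := by exact_mod_cast (hdeg u).ne'
    rw [← (AvoidingWalk.consEquiv hu n).tsum_eq,
      Summable.tsum_sigma' (fun _ => Summable.of_finite) Summable.of_finite]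
    calc ∑' (v : G.neighborSet u) (q : G.AvoidingWalk V₁ v n),
          walkWeight G (Walk.cons v.2 q.1.2) * f q.1.1
        = ∑' v : G.neighborSet u, f v / G.degree u := by
          refine tsum_congr fun v => ?_
          rw [← ih v, ← tsum_div_const]
          exact tsum_congr fun q => by rw [walkWeight_cons G v.2, div_mul_eq_mul_div]
      _ = f u := by
          rw [tsum_fintype, ← Finset.sum_div, Finset.sum_set_coe (f := f), ← neighborFinset_def,
            ← hf u hu, mul_div_cancel_left₀ _ hdeg₀]

lemma abs_le_mul_avoidProb₀ {f : V → ℝ} (hdeg : ∀ v : V, 0 < G.degree v)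
    (hf : G.IsHarmonicOff V₁ f) (hf₁ : ∀ v ∈ V₁, f v = 0) {u : V} {n : ℕ} {C : ℝ}
    (hC : ∀ v, G.dist u v ≤ n → |f v| ≤ C) : |f u| ≤ C * avoidProb₀ G V₁ u n := by
  rw [← tsum_avoidingWalk_walkWeight_mul hdeg hf hf₁ n u]
  exact abs_tsum_mul_le_of_finite (fun p => walkWeight_nonneg G _)
    fun p => hC _ ((dist_le p.1.2).trans_eq p.2.1)

end SimpleGraph

/-- Uniqueness of subexponential harmonic extensions: two functions harmonic off `V₁`,
agreeing on `V₁`, and growing at most like `B β^n` with `1 ≤ β < 1/(1−α')`, where the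
hitting time `T` of `V₁` has tail `P_u(T ≥ m) ≤ A(1−α')^m`, must coincide everywhere. -/
theorem harmonic_extension_unique {V : Type*} (G : SimpleGraph V)
    [∀ v : V, Fintype (G.neighborSet v)] (hconn : G.Connected)
    (hdeg : ∀ v : V, 0 < G.degree v) (V₁ : Set V) (o : V)
    (α' A : ℝ) (hα' : 0 < α') (hα'' : α' < 1)
    (htail : ∀ m : ℕ, 1 ≤ m → ∀ u : V, avoidProb₀ G V₁ u (m - 1) ≤ A * (1 - α') ^ m)
    (β B : ℝ) (hβ : 1 ≤ β) (hβ' : β < 1 / (1 - α'))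
    (ψ φ : V → ℝ)
    (hψharm : ∀ u ∉ V₁, (G.degree u : ℝ) * ψ u = ∑ v ∈ G.neighborFinset u, ψ v)
    (hφharm : ∀ u ∉ V₁, (G.degree u : ℝ) * φ u = ∑ v ∈ G.neighborFinset u, φ v)
    (hψgrow : ∀ n : ℕ, 1 ≤ n → ∀ v : V, G.dist o v ≤ n → |ψ v| ≤ B * β ^ n)
    (hφgrow : ∀ n : ℕ, 1 ≤ n → ∀ v : V, G.dist o v ≤ n → |φ v| ≤ B * β ^ n)
    (hagree : ∀ v ∈ V₁, ψ v = φ v) :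
    ψ = φ := by
  have hr₀ : 0 ≤ β * (1 - α') := mul_nonneg (zero_le_one.trans hβ) (sub_nonneg.mpr hα''.le)
  have hr₁ : β * (1 - α') < 1 := (lt_div_iff₀ (sub_pos.mpr hα'')).mp hβ'
  have hf : G.IsHarmonicOff V₁ (ψ - φ) := IsHarmonicOff.sub hψharm hφharm
  have hf₁ : ∀ v ∈ V₁, (ψ - φ) v = 0 := fun v hv => sub_eq_zero.mpr (hagree v hv)
  funext u
  rw [← sub_eq_zero]
  set d := G.dist o u
  refine eq_zero_of_abs_le_mul_pow hr₀ hr₁ (K := 2 * B * β ^ (d + 1) * A * (1 - α')) fun n => ?_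
  have hbound : ∀ v, G.dist u v ≤ n → |(ψ - φ) v| ≤ 2 * B * β ^ (d + n + 1) := fun v hv => by
    have hov : G.dist o v ≤ d + n + 1 := by
      have := hconn.dist_triangle (u := o) (v := u) (w := v)
      omega
    calc |(ψ - φ) v| ≤ |ψ v| + |φ v| := abs_sub _ _
      _ ≤ 2 * B * β ^ (d + n + 1) := by
        linarith [hψgrow _ (by omega) v hov, hφgrow _ (by omega) v hov]
  calc |ψ u - φ u| ≤ 2 * B * β ^ (d + n + 1) * avoidProb₀ G V₁ u n :=
        abs_le_mul_avoidProb₀ hdeg hf hf₁ hbound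
    _ ≤ 2 * B * β ^ (d + n + 1) * (A * (1 - α') ^ (n + 1)) :=
        mul_le_mul_of_nonneg_left (htail (n + 1) n.succ_pos u)
          ((abs_nonneg _).trans (hbound u (by simp)))
    _ = 2 * B * β ^ (d + 1) * A * (1 - α') * (β * (1 - α')) ^ n := by rw [mul_pow]; ring
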